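/- arXiv:2304.00801 — 4 statements merged into one kernel-verified Lean document; each statement's English description precedes it below -/
import Mathlib

section
/- For any measurable function m : Ω → [0,1] on a probability space (Ω, λ), the infimum of the soft-Dice loss SD_m(c) = 1 − 2∫cm dλ/(‖c‖₁ + ‖m‖₁) over measurable c : Ω → [0,1] equals 1 minus the supremum of the Dice score D_m(s) = 2∫sm dλ/(‖s‖₁ + ‖m‖₁) over measurable binary functions s : Ω → {0,1}. That is, inf_{c∈M} SD_m(c) = 1 − sup_{s∈S} D_m(s). -/
open MeasureTheory Filter

noncomputable section

/-- The unit cube `[0,1]^n`. -/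
def cube (n : ℕ) : Set (Fin n → ℝ) := Set.univ.pi fun _ => Set.Icc (0:ℝ) 1

/-- The (normalized) Lebesgue measure on the unit cube. -/
def lam (n : ℕ) : Measure (Fin n → ℝ) := volume.restrict (cube n)

/-- The `L¹`-volume `‖f‖₁ = ∫ f dλ` (for nonnegative `f`). -/
def vol1 (n : ℕ) (f : (Fin n → ℝ) → ℝ) : ℝ := ∫ ω, f ω ∂(lam n)

/-- The Dice score `D_m(s) = 2∫ s·m dλ / (‖s‖₁ + ‖m‖₁)`. -/
def Dice (n : ℕ) (m s : (Fin n → ℝ) → ℝ) : ℝ :=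
  2 * (∫ ω, s ω * m ω ∂(lam n)) / (vol1 n s + vol1 n m)

/-- The soft-Dice loss `SD_m(c) = 1 - 2∫ c·m dλ / (‖c‖₁ + ‖m‖₁)`. -/
def softDice (n : ℕ) (m c : (Fin n → ℝ) → ℝ) : ℝ :=
  1 - 2 * (∫ ω, c ω * m ω ∂(lam n)) / (vol1 n c + vol1 n m)

/-- Membership in `M`: measurable with values in `[0,1]`. -/
def MemM (n : ℕ) (m : (Fin n → ℝ) → ℝ) : Prop :=
  Measurable m ∧ ∀ ω, m ω ∈ Set.Icc (0:ℝ) 1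

/-- Membership in `S`: measurable with values in `{0,1}`. -/
def MemS (n : ℕ) (s : (Fin n → ℝ) → ℝ) : Prop :=
  Measurable s ∧ ∀ ω, s ω = 0 ∨ s ω = 1

/-- The set of soft-Dice values over `M`. -/
def SDvals (n : ℕ) (m : (Fin n → ℝ) → ℝ) : Set ℝ :=
  {x : ℝ | ∃ c, MemM n c ∧ x = softDice n m c}

/-- The set of Dice values over `S`. -/
def Dvals (n : ℕ) (m : (Fin n → ℝ) → ℝ) : Set ℝ :=
  {x : ℝ | ∃ s, MemS n s ∧ x = Dice n m s}

/-! The soft-Dice loss is `1 - D_m`, so its infimum over `M` is `1 - sup_M D_m`, and it remains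
to see that relaxing `S` to `M` does not raise the supremum. By the layer-cake formula, for
`c ∈ M` both `2∫ c·m` and `‖c‖₁ + ‖m‖₁` are averages over `t ∈ (0,1]` of the same quantities for
the indicator of `{c > t}`. A quotient of averages with positive denominators is dominated by one
of the pointwise quotients, so some threshold set has Dice score at least `D_m(c)`. -/

open Set

section LayerCake

variable {Ω : Type*} [MeasurableSpace Ω] {ρ : Measure Ω} {c w : Ω → ℝ}

lemma integrable_of_mem_Icc [IsFiniteMeasure ρ] (hc : Measurable c)
    (hc01 : ∀ ω, c ω ∈ Icc (0:ℝ) 1) : Integrable c ρ :=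
  .of_bound hc.aestronglyMeasurable 1 <| .of_forall fun ω => by
    rw [Real.norm_of_nonneg (hc01 ω).1]; exact (hc01 ω).2

lemma integral_eq_integral_Ioc_measureReal_lt [IsFiniteMeasure ρ] (hc : Measurable c)
    (hc01 : ∀ ω, c ω ∈ Icc (0:ℝ) 1) :
    ∫ ω, c ω ∂ρ = ∫ t in Ioc (0:ℝ) 1, ρ.real {ω | t < c ω} := by
  rw [(integrable_of_mem_Icc hc hc01).integral_eq_integral_meas_lt
    (ae_of_all _ fun ω => (hc01 ω).1)]
  refine setIntegral_eq_of_subset_of_forall_sdiff_eq_zero measurableSet_Ioi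
    Ioc_subset_Ioi_self fun t ht => ?_
  have hempty : {ω | t < c ω} = ∅ :=
    eq_empty_of_forall_notMem fun ω hω => ht.2 ⟨ht.1, (lt_of_lt_of_le hω (hc01 ω).2).le⟩
  simp [hempty]

lemma integral_mul_eq_integral_Ioc_setIntegral (hc : Measurable c)
    (hc01 : ∀ ω, c ω ∈ Icc (0:ℝ) 1) (hw0 : 0 ≤ w) (hwi : Integrable w ρ) :
    ∫ ω, c ω * w ω ∂ρ = ∫ t in Ioc (0:ℝ) 1, ∫ ω in {ω | t < c ω}, w ω ∂ρ := by
  set ν := ρ.withDensity fun ω => ENNReal.ofReal (w ω)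
  have : IsFiniteMeasure ν := isFiniteMeasure_withDensity_ofReal hwi.2
  have hν : ∫ ω, c ω ∂ν = ∫ ω, c ω * w ω ∂ρ := by
    rw [integral_withDensity_eq_integral_toReal_smul₀ hwi.aemeasurable.ennreal_ofReal
      (.of_forall fun _ => ENNReal.ofReal_lt_top)]
    simp_rw [ENNReal.toReal_ofReal (hw0 _), smul_eq_mul, mul_comm]
  rw [← hν, integral_eq_integral_Ioc_measureReal_lt hc hc01]
  congr 1 with t
  rw [measureReal_def, withDensity_apply _ (measurableSet_lt measurable_const hc),
    ← ofReal_integral_eq_lintegral_ofReal hwi.restrict (.of_forall hw0),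
    ENNReal.toReal_ofReal (setIntegral_nonneg (measurableSet_lt measurable_const hc)
      fun ω _ => hw0 ω)]

end LayerCake

lemma exists_integral_div_integral_le {α : Type*} [MeasurableSpace α] {P : Measure α}
    [IsProbabilityMeasure P] {A B : α → ℝ} (hA : Integrable A P) (hB : Integrable B P)
    (hBpos : ∀ x, 0 < B x) (hBint : 0 < ∫ x, B x ∂P) :
    ∃ x, (∫ x, A x ∂P) / (∫ x, B x ∂P) ≤ A x / B x := by
  set r := (∫ x, A x ∂P) / (∫ x, B x ∂P)
  have hzero : ∫ x, (r * B x - A x) ∂P = 0 := by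
    rw [integral_sub (hB.const_mul r) hA, integral_const_mul, div_mul_cancel₀ _ hBint.ne', sub_self]
  obtain ⟨x, hx⟩ := exists_le_integral (f := fun x => r * B x - A x) ((hB.const_mul r).sub hA)
  refine ⟨x, (le_div_iff₀ (hBpos x)).2 ?_⟩
  linarith

section DiceScore

variable {Ω : Type*} [MeasurableSpace Ω] {ρ : Measure Ω} {m c : Ω → ℝ}

/-- `Dice n m` is `diceScore (lam n) m` by definition. -/
def diceScore (ρ : Measure Ω) (m c : Ω → ℝ) : ℝ :=
  2 * (∫ ω, c ω * m ω ∂ρ) / (∫ ω, c ω ∂ρ + ∫ ω, m ω ∂ρ)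

lemma diceScore_indicator_one {S : Set Ω} (hS : MeasurableSet S) :
    diceScore ρ m (S.indicator 1) = 2 * (∫ ω in S, m ω ∂ρ) / (ρ.real S + ∫ ω, m ω ∂ρ) := by
  have hmul : (fun ω => S.indicator 1 ω * m ω) = S.indicator m := by
    ext ω; by_cases hω : ω ∈ S <;> simp [hω]
  rw [diceScore, hmul, integral_indicator hS, integral_indicator_one hS]

lemma diceScore_le_one [IsFiniteMeasure ρ] (hc : Measurable c) (hc01 : ∀ ω, c ω ∈ Icc (0:ℝ) 1)
    (hm : Measurable m) (hm01 : ∀ ω, m ω ∈ Icc (0:ℝ) 1) : diceScore ρ m c ≤ 1 := by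
  have hci := integrable_of_mem_Icc (ρ := ρ) hc hc01
  have hmi := integrable_of_mem_Icc (ρ := ρ) hm hm01
  have hcmi : Integrable (fun ω => c ω * m ω) ρ := integrable_of_mem_Icc (hc.mul hm) fun ω =>
    ⟨mul_nonneg (hc01 ω).1 (hm01 ω).1, mul_le_one₀ (hc01 ω).2 (hm01 ω).1 (hm01 ω).2⟩
  refine div_le_one_of_le₀ ?_
    (add_nonneg (integral_nonneg fun ω => (hc01 ω).1) (integral_nonneg fun ω => (hm01 ω).1))
  rw [← integral_add hci hmi, ← integral_const_mul]
  refine integral_mono (hcmi.const_mul 2) (hci.add hmi) fun ω => ?_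
  nlinarith [mul_nonneg (hc01 ω).1 (sub_nonneg.2 (hm01 ω).2),
    mul_nonneg (hm01 ω).1 (sub_nonneg.2 (hc01 ω).2)]

lemma exists_diceScore_le_diceScore_indicator [IsFiniteMeasure ρ] (hc : Measurable c)
    (hc01 : ∀ ω, c ω ∈ Icc (0:ℝ) 1) (hm0 : 0 ≤ m) (hmi : Integrable m ρ)
    (hpos : 0 < ∫ ω, m ω ∂ρ) :
    ∃ t : ℝ, diceScore ρ m c ≤ diceScore ρ m ({ω | t < c ω}.indicator 1) := by
  have hS (t : ℝ) : MeasurableSet {ω | t < c ω} := measurableSet_lt measurable_const hc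
  have hsub {t t' : ℝ} (h : t ≤ t') : {ω | t' < c ω} ⊆ {ω | t < c ω} :=
    fun ω hω => lt_of_le_of_lt h hω
  set A : ℝ → ℝ := fun t => 2 * ∫ ω in {ω | t < c ω}, m ω ∂ρ
  set B : ℝ → ℝ := fun t => ρ.real {ω | t < c ω} + ∫ ω, m ω ∂ρ
  have hmeas_anti : Antitone fun t : ℝ => ρ.real {ω | t < c ω} :=
    fun t t' h => measureReal_mono (hsub h)
  have hA : Antitone A := fun t t' h => mul_le_mul_of_nonneg_left
    (setIntegral_mono_set hmi.integrableOn (ae_of_all _ hm0) (hsub h).eventuallyLE) zero_le_two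
  have hint {f : ℝ → ℝ} (hf : Antitone f) : Integrable f (volume.restrict (Ioc 0 1)) :=
    ((hf.antitoneOn _).integrableOn_isCompact isCompact_Icc).mono_set Ioc_subset_Icc_self
  have : IsProbabilityMeasure (volume.restrict (Ioc (0:ℝ) 1)) := ⟨by simp⟩
  have hAint : ∫ t in Ioc 0 1, A t = 2 * ∫ ω, c ω * m ω ∂ρ := by
    rw [integral_const_mul, integral_mul_eq_integral_Ioc_setIntegral hc hc01 hm0 hmi]
  have hBint : ∫ t in Ioc 0 1, B t = ∫ ω, c ω ∂ρ + ∫ ω, m ω ∂ρ := by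
    rw [integral_add (hint hmeas_anti) (integrable_const _), integral_const,
      ← integral_eq_integral_Ioc_measureReal_lt hc hc01]
    simp
  obtain ⟨t, ht⟩ := exists_integral_div_integral_le (hint hA) (hint (hmeas_anti.add_const _))
    (fun t => add_pos_of_nonneg_of_pos measureReal_nonneg hpos)
    (hBint ▸ add_pos_of_nonneg_of_pos (integral_nonneg fun ω => (hc01 ω).1) hpos)
  refine ⟨t, ?_⟩
  rwa [diceScore_indicator_one (hS t), diceScore, ← hAint, ← hBint]

end DiceScore

instance (n : ℕ) : IsFiniteMeasure (lam n) :=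
  isFiniteMeasure_restrict.2 (isCompact_univ_pi fun _ => isCompact_Icc).measure_lt_top.ne

lemma MemS.memM {n : ℕ} {s : (Fin n → ℝ) → ℝ} (hs : MemS n s) : MemM n s :=
  ⟨hs.1, fun ω => by rcases hs.2 ω with h | h <;> simp [h]⟩

lemma memS_indicator_one {n : ℕ} {S : Set (Fin n → ℝ)} (hS : MeasurableSet S) :
    MemS n (S.indicator 1) :=
  ⟨measurable_one.indicator hS, fun ω => by
    simpa using S.indicator_eq_zero_or_self (1 : (Fin n → ℝ) → ℝ) ω⟩

lemma exists_memS_dice_ge {n : ℕ} {m c : (Fin n → ℝ) → ℝ} (hm : MemM n m)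
    (hpos : 0 < vol1 n m) (hc : MemM n c) : ∃ s, MemS n s ∧ Dice n m c ≤ Dice n m s := by
  obtain ⟨t, ht⟩ := exists_diceScore_le_diceScore_indicator hc.1 hc.2 (fun ω => (hm.2 ω).1)
    (integrable_of_mem_Icc hm.1 hm.2) hpos
  exact ⟨_, memS_indicator_one (measurableSet_lt measurable_const hc.1), ht⟩

theorem soft_dice_inf_eq_one_sub_sup_dice
    (n : ℕ) (m : (Fin n → ℝ) → ℝ) (hm : MemM n m) (hpos : 0 < vol1 n m) :
    sInf (SDvals n m) = 1 - sSup (Dvals n m) := by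
  set diceVals := {x | ∃ c, MemM n c ∧ x = Dice n m c}
  have hSD : SDvals n m = (1 - ·) '' diceVals := by
    ext x
    constructor
    · rintro ⟨c, hc, rfl⟩
      exact ⟨_, ⟨c, hc, rfl⟩, rfl⟩
    · rintro ⟨_, ⟨c, hc, rfl⟩, rfl⟩
      exact ⟨c, hc, rfl⟩
  have hbdd : BddAbove diceVals := ⟨1, by
    rintro _ ⟨c, hc, rfl⟩
    exact diceScore_le_one hc.1 hc.2 hm.1 hm.2⟩
  have hsup : sSup diceVals = sSup (Dvals n m) := by
    refine csSup_eq_csSup_of_forall_exists_le ?_ ?_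
    · rintro _ ⟨c, hc, rfl⟩
      obtain ⟨s, hs, hle⟩ := exists_memS_dice_ge hm hpos hc
      exact ⟨_, ⟨s, hs, rfl⟩, hle⟩
    · rintro _ ⟨s, hs, rfl⟩
      exact ⟨_, ⟨s, hs.memM, rfl⟩, le_rfl⟩
  rw [hSD, ← hsup]
  have hne : diceVals.Nonempty := ⟨_, m, hm, rfl⟩
  exact (antitone_const_tsub.map_csSup_of_continuousAt (continuous_sub_left 1).continuousAt
    hne hbdd).symm
end
end

section
/- Let m : Ω → [0,1] be measurable with ‖m‖₁ > 0 and D* = sup_{s∈S} D_m(s). A binary function s ∈ S attains the supremum of D_m over S if and only if, λ-almost everywhere, s(ω) = 0 when m(ω) < D*/2 and s(ω) = 1 when m(ω) > D*/2. -/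
open MeasureTheory Filter

noncomputable section

/-!
For every level `c`, `Dice m s ≤ c` is equivalent to `∫ s (2m - c) ≤ c ‖m‖₁`, and for binary `s`
the left side is at most `∫ (2m - c)⁺`, with equality exactly for the thresholdings of `m` at
`c / 2`. For the supremum `D`, the thresholding at `D / 2` gives `∫ (2m - D)⁺ ≤ D ‖m‖₁`, and a
strict inequality would push every Dice value below `D` by a fixed amount (as `‖s‖₁ ≤ 1`); hence
`∫ (2m - D)⁺ = D ‖m‖₁`, and `s` is a maximizer iff `∫ s (2m - D) = ∫ (2m - D)⁺`, i.e. iff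
`s (2m - D) = (2m - D)⁺` almost everywhere, which is the thresholding condition.
-/

instance (n : ℕ) : IsProbabilityMeasure (lam n) :=
  ⟨by
    rw [lam, Measure.restrict_apply MeasurableSet.univ, Set.univ_inter, cube, volume_pi_pi]
    simp [Real.volume_Icc]⟩

theorem mul_le_posPart_of_eq_zero_or_eq_one {s x : ℝ} (hs : s = 0 ∨ s = 1) : s * x ≤ x⁺ := by
  rcases hs with rfl | rfl
  · simp
  · simpa using le_posPart x

theorem mul_eq_posPart_iff_of_eq_zero_or_eq_one {s x : ℝ} (hs : s = 0 ∨ s = 1) :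
    s * x = x⁺ ↔ (x < 0 → s = 0) ∧ (0 < x → s = 1) := by
  rcases hs with rfl | rfl
  · simp [eq_comm (a := (0 : ℝ)), posPart_eq_zero]
  · simp [eq_comm (a := x), posPart_eq_self]

variable {n : ℕ} {m s : (Fin n → ℝ) → ℝ} {μ : Measure (Fin n → ℝ)}

theorem MemS.nonneg (hs : MemS n s) (ω : Fin n → ℝ) : 0 ≤ s ω := by
  rcases hs.2 ω with h | h <;> simp [h]

theorem MemS.le_one (hs : MemS n s) (ω : Fin n → ℝ) : s ω ≤ 1 := by
  rcases hs.2 ω with h | h <;> simp [h]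

theorem MemS.norm_le_one (hs : MemS n s) (ω : Fin n → ℝ) : ‖s ω‖ ≤ 1 := by
  rw [Real.norm_eq_abs, abs_le]
  exact ⟨by linarith [hs.nonneg ω], hs.le_one ω⟩

theorem MemS.integrable_mul {f : (Fin n → ℝ) → ℝ} (hs : MemS n s) (hf : Integrable f μ) :
    Integrable (fun ω => s ω * f ω) μ :=
  hf.bdd_mul hs.1.aestronglyMeasurable (ae_of_all _ hs.norm_le_one)

variable [IsFiniteMeasure μ]

theorem MemS.integrable (hs : MemS n s) : Integrable s μ :=
  .of_bound hs.1.aestronglyMeasurable 1 (ae_of_all _ hs.norm_le_one)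

theorem MemS.vol1_nonneg (hs : MemS n s) : 0 ≤ vol1 n s :=
  integral_nonneg hs.nonneg

theorem MemS.vol1_le_one (hs : MemS n s) : vol1 n s ≤ 1 := by
  simpa [vol1] using integral_mono (μ := lam n) hs.integrable (integrable_const 1) hs.le_one

theorem MemM.integrable (hm : MemM n m) : Integrable m μ :=
  .of_bound hm.1.aestronglyMeasurable 1 (ae_of_all _ fun ω => by
    rw [Real.norm_eq_abs, abs_le]
    exact ⟨by linarith [(hm.2 ω).1], (hm.2 ω).2⟩)

theorem MemM.integrable_two_mul_sub (hm : MemM n m) (c : ℝ) :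
    Integrable (fun ω => 2 * m ω - c) μ :=
  (hm.integrable.const_mul 2).sub (integrable_const c)

theorem MemM.integrable_posPart_two_mul_sub (hm : MemM n m) (c : ℝ) :
    Integrable (fun ω => (2 * m ω - c)⁺) μ :=
  (hm.integrable_two_mul_sub c).pos_part

def threshold (m : (Fin n → ℝ) → ℝ) (c : ℝ) : (Fin n → ℝ) → ℝ :=
  fun ω => if 0 < 2 * m ω - c then 1 else 0

theorem memS_threshold (hm : MemM n m) (c : ℝ) : MemS n (threshold m c) := by
  refine ⟨Measurable.ite (measurableSet_lt measurable_const ((hm.1.const_mul 2).sub_const c))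
    measurable_const measurable_const, fun ω => ?_⟩
  unfold threshold
  split_ifs <;> simp

theorem threshold_mul_eq_posPart (m : (Fin n → ℝ) → ℝ) (c : ℝ) (ω : Fin n → ℝ) :
    threshold m c ω * (2 * m ω - c) = (2 * m ω - c)⁺ := by
  unfold threshold
  split_ifs with h
  · simpa using (posPart_eq_self.2 h.le).symm
  · simpa using (posPart_eq_zero.2 (not_lt.1 h)).symm

theorem integral_mul_two_mul_sub (hs : MemS n s) (hm : MemM n m) (c : ℝ) :
    ∫ ω, s ω * (2 * m ω - c) ∂lam n = 2 * ∫ ω, s ω * m ω ∂lam n - c * vol1 n s := by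
  simp_rw [mul_sub, mul_left_comm (s _) 2, mul_comm (s _) c]
  rw [integral_sub ((hs.integrable_mul hm.integrable).const_mul 2) (hs.integrable.const_mul c),
    integral_const_mul, integral_const_mul, vol1]

theorem integral_mul_two_mul_sub_le (hs : MemS n s) (hm : MemM n m) (c : ℝ) :
    ∫ ω, s ω * (2 * m ω - c) ∂μ ≤ ∫ ω, (2 * m ω - c)⁺ ∂μ :=
  integral_mono (hs.integrable_mul (hm.integrable_two_mul_sub c))
    (hm.integrable_posPart_two_mul_sub c) fun ω => mul_le_posPart_of_eq_zero_or_eq_one (hs.2 ω)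

theorem integral_mul_two_mul_sub_eq_iff (hs : MemS n s) (hm : MemM n m) (c : ℝ) :
    ∫ ω, s ω * (2 * m ω - c) ∂μ = ∫ ω, (2 * m ω - c)⁺ ∂μ ↔
      ∀ᵐ ω ∂μ, (2 * m ω - c < 0 → s ω = 0) ∧ (0 < 2 * m ω - c → s ω = 1) := by
  rw [integral_eq_iff_of_ae_le (hs.integrable_mul (hm.integrable_two_mul_sub c))
    (hm.integrable_posPart_two_mul_sub c)
    (ae_of_all _ fun ω => mul_le_posPart_of_eq_zero_or_eq_one (hs.2 ω))]
  exact eventually_congr (ae_of_all _ fun ω => mul_eq_posPart_iff_of_eq_zero_or_eq_one (hs.2 ω))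

theorem vol1_add_pos (hs : MemS n s) (hpos : 0 < vol1 n m) : 0 < vol1 n s + vol1 n m := by
  linarith [hs.vol1_nonneg]

theorem dice_sub_mul (hs : MemS n s) (hm : MemM n m) (hpos : 0 < vol1 n m) (c : ℝ) :
    (Dice n m s - c) * (vol1 n s + vol1 n m) =
      ∫ ω, s ω * (2 * m ω - c) ∂lam n - c * vol1 n m := by
  rw [integral_mul_two_mul_sub hs hm, sub_mul, Dice, div_mul_cancel₀ _ (vol1_add_pos hs hpos).ne']
  ring

theorem dice_eq_iff (hs : MemS n s) (hm : MemM n m) (hpos : 0 < vol1 n m) (c : ℝ) :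
    Dice n m s = c ↔ ∫ ω, s ω * (2 * m ω - c) ∂lam n = c * vol1 n m := by
  rw [← sub_eq_zero, ← sub_eq_zero (a := ∫ ω, _ ∂_), ← dice_sub_mul hs hm hpos,
    mul_eq_zero, or_iff_left (vol1_add_pos hs hpos).ne']

theorem dice_le_iff (hs : MemS n s) (hm : MemM n m) (hpos : 0 < vol1 n m) (c : ℝ) :
    Dice n m s ≤ c ↔ ∫ ω, s ω * (2 * m ω - c) ∂lam n ≤ c * vol1 n m := by
  rw [← sub_nonpos, ← sub_nonpos (a := ∫ ω, _ ∂_), ← dice_sub_mul hs hm hpos,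
    ← mul_le_mul_iff_left₀ (vol1_add_pos hs hpos), zero_mul]

theorem dice_le_sub_of_integral_le (hs : MemS n s) (hm : MemM n m) (hpos : 0 < vol1 n m)
    {c δ : ℝ} (hδ : 0 ≤ δ) (h : ∫ ω, s ω * (2 * m ω - c) ∂lam n ≤ c * vol1 n m - δ) :
    Dice n m s ≤ c - δ / (1 + vol1 n m) := by
  have hle : Dice n m s ≤ c := (dice_le_iff hs hm hpos c).2 (by linarith)
  have hden : vol1 n s + vol1 n m ≤ 1 + vol1 n m := by linarith [hs.vol1_le_one]
  rw [le_sub_iff_add_le, ← le_sub_iff_add_le', div_le_iff₀ (by linarith)]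
  linarith [dice_sub_mul hs hm hpos c, mul_le_mul_of_nonpos_left hden (sub_nonpos.2 hle)]

theorem bddAbove_Dvals (hm : MemM n m) (hpos : 0 < vol1 n m) : BddAbove (Dvals n m) := by
  refine ⟨2, ?_⟩
  rintro x ⟨s, hs, rfl⟩
  rw [Dice, div_le_iff₀ (vol1_add_pos hs hpos)]
  have : ∫ ω, s ω * m ω ∂lam n ≤ vol1 n m :=
    integral_mono (hs.integrable_mul hm.integrable) hm.integrable fun ω => by
      nlinarith [hs.nonneg ω, hs.le_one ω, (hm.2 ω).1]
  linarith [hs.vol1_nonneg]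

theorem integral_posPart_eq_sSup_Dvals_mul (hm : MemM n m) (hpos : 0 < vol1 n m) :
    ∫ ω, (2 * m ω - sSup (Dvals n m))⁺ ∂lam n = sSup (Dvals n m) * vol1 n m := by
  set D := sSup (Dvals n m)
  refine le_antisymm ?_ (not_lt.1 fun hlt => ?_)
  · have hs := memS_threshold hm D
    have hle : Dice n m (threshold m D) ≤ D := le_csSup (bddAbove_Dvals hm hpos) ⟨_, hs, rfl⟩
    simpa only [threshold_mul_eq_posPart] using (dice_le_iff hs hm hpos D).1 hle
  · set δ := D * vol1 n m - ∫ ω, (2 * m ω - D)⁺ ∂lam n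
    have hδ : 0 < δ := sub_pos.2 hlt
    have hgap : D ≤ D - δ / (1 + vol1 n m) := by
      refine csSup_le ⟨_, _, memS_threshold hm D, rfl⟩ ?_
      rintro x ⟨s, hs, rfl⟩
      refine dice_le_sub_of_integral_le hs hm hpos hδ.le ?_
      linarith [integral_mul_two_mul_sub_le (μ := lam n) hs hm D]
    linarith [div_pos hδ (by linarith : (0 : ℝ) < 1 + vol1 n m)]

theorem dice_maximizer_characterization
    (n : ℕ) (m : (Fin n → ℝ) → ℝ) (hm : MemM n m) (hpos : 0 < vol1 n m)
    (Dstar : ℝ) (hD : Dstar = sSup (Dvals n m))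
    (s : (Fin n → ℝ) → ℝ) (hs : MemS n s) :
    Dice n m s = sSup (Dvals n m) ↔
      (∀ᵐ ω ∂(lam n),
        (m ω < Dstar / 2 → s ω = 0) ∧ (Dstar / 2 < m ω → s ω = 1)) := by
  subst hD
  rw [dice_eq_iff hs hm hpos, ← integral_posPart_eq_sSup_Dvals_mul hm hpos,
    integral_mul_two_mul_sub_eq_iff (μ := lam n) hs hm]
  refine eventually_congr (ae_of_all _ fun ω => ?_)
  rw [sub_neg, sub_pos, lt_div_iff₀ two_pos, div_lt_iff₀ two_pos, mul_comm (m ω)]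
end
end

section
/- For any m ∈ M with ‖m‖₁ > 0, every minimizer c of the soft-Dice loss SD_m over M satisfies ‖m‖₁² ≤ ‖c‖₁ ≤ 1. -/
open MeasureTheory Filter

noncomputable section

/-! The minimizer `c` does at least as well as the constant `1`, whose loss is
`1 - 2‖m‖₁ / (1 + ‖m‖₁)`. Since `∫ c·m ≤ ‖c‖₁`, this gives
`2‖m‖₁ (‖c‖₁ + ‖m‖₁) ≤ 2‖c‖₁ (1 + ‖m‖₁)`, i.e. `‖m‖₁² ≤ ‖c‖₁`. The upper bound is just
`c ≤ 1` on a probability space. -/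

instance lam.instIsProbabilityMeasure (n : ℕ) : IsProbabilityMeasure (lam n) := by
  constructor
  rw [lam, Measure.restrict_apply_univ, cube, volume_pi_pi]
  simp [Real.volume_Icc]

theorem MemM.one (n : ℕ) : MemM n fun _ => 1 :=
  ⟨measurable_const, fun _ => ⟨zero_le_one, le_rfl⟩⟩

namespace MemM

variable {n : ℕ} {f g : (Fin n → ℝ) → ℝ}

theorem integrable_s3 (hf : MemM n f) : Integrable f (lam n) := by
  refine (integrable_const (1 : ℝ)).mono' hf.1.aestronglyMeasurable (ae_of_all _ fun ω => ?_)
  rw [Real.norm_eq_abs, abs_of_nonneg (hf.2 ω).1]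
  exact (hf.2 ω).2

theorem mul (hf : MemM n f) (hg : MemM n g) : MemM n fun ω => f ω * g ω :=
  ⟨hf.1.mul hg.1, fun ω =>
    ⟨mul_nonneg (hf.2 ω).1 (hg.2 ω).1, mul_le_one₀ (hf.2 ω).2 (hg.2 ω).1 (hg.2 ω).2⟩⟩

theorem vol1_nonneg (hf : MemM n f) : 0 ≤ vol1 n f :=
  integral_nonneg fun ω => (hf.2 ω).1

theorem vol1_le_one (hf : MemM n f) : vol1 n f ≤ 1 := by
  simpa [vol1] using integral_mono hf.integrable_s3 (integrable_const 1) fun ω => (hf.2 ω).2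

theorem integral_mul_nonneg (hf : MemM n f) (hg : MemM n g) :
    0 ≤ ∫ ω, f ω * g ω ∂(lam n) :=
  (hf.mul hg).vol1_nonneg

theorem integral_mul_le_vol1_left (hf : MemM n f) (hg : MemM n g) :
    ∫ ω, f ω * g ω ∂(lam n) ≤ vol1 n f :=
  integral_mono (hf.mul hg).integrable_s3 hf.integrable_s3 fun ω =>
    mul_le_of_le_one_right (hf.2 ω).1 (hg.2 ω).2

theorem integral_mul_le_vol1_right (hf : MemM n f) (hg : MemM n g) :
    ∫ ω, f ω * g ω ∂(lam n) ≤ vol1 n g := by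
  simpa only [mul_comm] using hg.integral_mul_le_vol1_left hf

end MemM

theorem softDice_nonneg {n : ℕ} {m c : (Fin n → ℝ) → ℝ} (hm : MemM n m) (hc : MemM n c) :
    0 ≤ softDice n m c := by
  have h2I : 2 * ∫ ω, c ω * m ω ∂(lam n) ≤ vol1 n c + vol1 n m := by
    linarith [hc.integral_mul_le_vol1_left hm, hc.integral_mul_le_vol1_right hm]
  rw [softDice, sub_nonneg]
  exact div_le_one_of_le₀ h2I (add_nonneg hc.vol1_nonneg hm.vol1_nonneg)

theorem softDice_one (n : ℕ) (m : (Fin n → ℝ) → ℝ) :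
    softDice n m (fun _ => 1) = 1 - 2 * vol1 n m / (1 + vol1 n m) := by
  simp [softDice, vol1]

theorem softDice_le_of_eq_sInf {n : ℕ} {m c c' : (Fin n → ℝ) → ℝ} (hm : MemM n m)
    (hmin : softDice n m c = sInf (SDvals n m)) (hc' : MemM n c') :
    softDice n m c ≤ softDice n m c' :=
  hmin ▸ csInf_le ⟨0, by rintro _ ⟨d, hd, rfl⟩; exact softDice_nonneg hm hd⟩ ⟨c', hc', rfl⟩

theorem sq_le_of_div_one_add_le_div {a b I : ℝ} (ha : 0 ≤ a) (hb : 0 ≤ b) (hI : I ≤ b)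
    (h : 2 * a / (1 + a) ≤ 2 * I / (b + a)) : a ^ 2 ≤ b := by
  rcases (add_nonneg hb ha).eq_or_lt with hba | hba
  · nlinarith
  · rw [div_le_div_iff₀ (by linarith) hba] at h
    nlinarith

theorem soft_dice_minimizer_volume_bounds_general
    (n : ℕ) (m : (Fin n → ℝ) → ℝ) (hm : MemM n m)
    (c : (Fin n → ℝ) → ℝ) (hc : MemM n c)
    (hmin : softDice n m c = sInf (SDvals n m)) :
    (vol1 n m) ^ 2 ≤ vol1 n c ∧ vol1 n c ≤ 1 := by
  have hle : softDice n m c ≤ softDice n m (fun _ => 1) :=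
    softDice_le_of_eq_sInf hm hmin (MemM.one n)
  rw [softDice_one, softDice] at hle
  exact ⟨sq_le_of_div_one_add_le_div hm.vol1_nonneg hc.vol1_nonneg
    (hc.integral_mul_le_vol1_left hm) (by linarith), hc.vol1_le_one⟩

theorem soft_dice_minimizer_volume_bounds
    (n : ℕ) (m : (Fin n → ℝ) → ℝ) (hm : MemM n m) (hpos : 0 < vol1 n m)
    (c : (Fin n → ℝ) → ℝ) (hc : MemM n c)
    (hmin : softDice n m c = sInf (SDvals n m)) :
    (vol1 n m) ^ 2 ≤ vol1 n c ∧ vol1 n c ≤ 1 :=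
  soft_dice_minimizer_volume_bounds_general n m hm c hc hmin
end
end

section
/- For every v ∈ (0,1] there exists a measurable m₁ : Ω → [0,1] with ‖m₁‖₁ = v such that some minimizer c of SD_{m₁} over M has ‖c‖₁ = 1. (The upper bound 1 on the volume of soft-Dice minimizers is sharp; e.g., take m₁ = v·1_A + appropriate structure so that m₁ > D*/2 almost everywhere.) -/
open MeasureTheory Filter

noncomputable section

/-! For a constant target `m ≡ v`, `SD_m(c) = 1 - 2av/(a+v)` depends only on `a = ‖c‖₁ ∈ [0,1]`
and decreases in `a`, so the constant prediction `c ≡ 1` is a minimizer. -/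

instance lam.isProbabilityMeasure (n : ℕ) : IsProbabilityMeasure (lam n) :=
  ⟨by simp [lam, cube, Real.volume_Icc_pi]⟩

lemma vol1_const (n : ℕ) (r : ℝ) : vol1 n (fun _ => r) = r := by
  simp [vol1]

lemma integral_mem_Icc_zero_one {α : Type*} [MeasurableSpace α] {μ : Measure α}
    [IsProbabilityMeasure μ] {f : α → ℝ} (hf : Measurable f) (hf01 : ∀ x, f x ∈ Set.Icc (0:ℝ) 1) :
    ∫ x, f x ∂μ ∈ Set.Icc (0:ℝ) 1 := by
  have hint : Integrable f μ :=
    Integrable.of_bound hf.aestronglyMeasurable 1 (ae_of_all _ fun x => by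
      rw [Real.norm_eq_abs, abs_le]; constructor <;> linarith [(hf01 x).1, (hf01 x).2])
  refine ⟨integral_nonneg fun x => (hf01 x).1, ?_⟩
  calc ∫ x, f x ∂μ ≤ ∫ _, (1:ℝ) ∂μ := integral_mono hint (integrable_const 1) fun x => (hf01 x).2
    _ = 1 := by simp

lemma vol1_mem_Icc {n : ℕ} {c : (Fin n → ℝ) → ℝ} (hc : MemM n c) : vol1 n c ∈ Set.Icc (0:ℝ) 1 :=
  integral_mem_Icc_zero_one hc.1 hc.2

lemma two_mul_mul_div_add_le {a v : ℝ} (ha0 : 0 ≤ a) (ha1 : a ≤ 1) (hv : 0 < v) :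
    2 * (a * v) / (a + v) ≤ 2 * v / (1 + v) := by
  rw [div_le_div_iff₀ (by linarith) (by linarith)]
  nlinarith [mul_nonneg (mul_nonneg hv.le hv.le) (sub_nonneg.mpr ha1)]

lemma softDice_const_left (n : ℕ) (v : ℝ) (c : (Fin n → ℝ) → ℝ) :
    softDice n (fun _ => v) c = 1 - 2 * (vol1 n c * v) / (vol1 n c + v) := by
  simp [softDice, integral_mul_const, vol1]

lemma memM_const {n : ℕ} {v : ℝ} (hv : v ∈ Set.Icc (0:ℝ) 1) : MemM n (fun _ => v) :=
  ⟨measurable_const, fun _ => hv⟩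

lemma isLeast_SDvals_const {n : ℕ} {v : ℝ} (hv : 0 < v) :
    IsLeast (SDvals n (fun _ => v)) (softDice n (fun _ => v) (fun _ => 1)) := by
  refine ⟨⟨_, memM_const ⟨zero_le_one, le_rfl⟩, rfl⟩, ?_⟩
  rintro _ ⟨c, hc, rfl⟩
  obtain ⟨ha0, ha1⟩ := vol1_mem_Icc hc
  simp only [softDice_const_left, vol1_const, one_mul]
  linarith [two_mul_mul_div_add_le ha0 ha1 hv]

theorem soft_dice_volume_upper_bound_sharp_general
    (n : ℕ) (v : ℝ) (hv : v ∈ Set.Ioc (0:ℝ) 1) :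
    ∃ m₁ : (Fin n → ℝ) → ℝ, MemM n m₁ ∧ vol1 n m₁ = v ∧
      ∃ c : (Fin n → ℝ) → ℝ, MemM n c ∧
        softDice n m₁ c = sInf (SDvals n m₁) ∧ vol1 n c = 1 :=
  ⟨fun _ => v, memM_const (Set.Ioc_subset_Icc_self hv), vol1_const n v,
    fun _ => 1, memM_const ⟨zero_le_one, le_rfl⟩, (isLeast_SDvals_const hv.1).csInf_eq.symm,
    vol1_const n 1⟩

theorem soft_dice_volume_upper_bound_sharp
    (n : ℕ) (hn : 1 ≤ n) (v : ℝ) (hv : v ∈ Set.Ioc (0:ℝ) 1) :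
    ∃ m₁ : (Fin n → ℝ) → ℝ, MemM n m₁ ∧ vol1 n m₁ = v ∧
      ∃ c : (Fin n → ℝ) → ℝ, MemM n c ∧
        softDice n m₁ c = sInf (SDvals n m₁) ∧ vol1 n c = 1 :=
  soft_dice_volume_upper_bound_sharp_general n v hv
end
end
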